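/- If 0 < λ < Λ(A,B) and t⁻ < t⁺ denote the two critical points of the fiber map ψ_λ on (0,∞), then t⁻ < T(A,B) < t⁺. -/

import Mathlib

open Real Set Filter

/-- Fiber map `ψ_λ(t) = (a/2)·A·t² + (λ/4)·A²·t⁴ − (1/γ)·B·t^γ`. -/
noncomputable def psi (a γ A B lam t : ℝ) : ℝ :=
  a / 2 * A * t ^ 2 + lam / 4 * A ^ 2 * t ^ 4 - 1 / γ * B * t ^ γ

/-- The constant `C_{a,γ} = a·((γ−2)/(4−γ))·((4−γ)/(2a))^(2/(γ−2))`. -/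
noncomputable def Cag (a γ : ℝ) : ℝ :=
  a * ((γ - 2) / (4 - γ)) * ((4 - γ) / (2 * a)) ^ (2 / (γ - 2))

/-- The extremal value `Λ(A,B) = C_{a,γ}·B^(2/(γ−2))·A^(−γ/(γ−2))`. -/
noncomputable def Lam (a γ A B : ℝ) : ℝ :=
  Cag a γ * B ^ (2 / (γ - 2)) * A ^ (-(γ / (γ - 2)))

/-- `T(A,B) = (2aA/((4−γ)B))^(1/(γ−2))`. -/
noncomputable def Tab (a γ A B : ℝ) : ℝ :=
  (2 * a * A / ((4 - γ) * B)) ^ (1 / (γ - 2))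

/-!
At a critical point `t > 0` of `ψ_λ`, dividing `ψ_λ'(t) = aAt + λA²t³ − Bt^(γ−1)` by `t³` gives
`critLevel t = λA²` with `critLevel t = B t^(γ−4) − aA t^(−2)`, a function independent of `λ`.
Its derivative is `t^(−3) (2aA − (4−γ)B t^(γ−2))`, positive before `T(A,B)` and negative after,
so `critLevel` takes each value at most once on either side of `T(A,B)`: two distinct critical
points must lie on opposite sides of it.
-/

theorem lt_and_lt_of_strictMonoOn_Ioc_of_strictAntiOn_Ici {α β : Type*} [LinearOrder α]
    [Preorder β] {f : α → β} {c τ s t : α} (hmono : StrictMonoOn f (Ioc c τ))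
    (hanti : StrictAntiOn f (Ici τ)) (hs : c < s) (hst : s < t) (heq : f s = f t) :
    s < τ ∧ τ < t := by
  constructor
  · by_contra! hτs
    exact (hanti hτs (hτs.trans hst.le) hst).ne' heq
  · by_contra! htτ
    exact (hmono ⟨hs, hst.le.trans htτ⟩ ⟨hs.trans hst, htτ⟩ hst).ne heq

noncomputable def critLevel (a γ A B t : ℝ) : ℝ :=
  B * t ^ (γ - 4) - a * A * t ^ (-2 : ℝ)

lemma psi_hasDerivAt {a γ A B lam t : ℝ} (hγ : γ ≠ 0) (ht : 0 < t) :
    HasDerivAt (psi a γ A B lam) (t ^ 3 * (lam * A ^ 2 - critLevel a γ A B t)) t := by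
  have hderiv : HasDerivAt (psi a γ A B lam)
      (a / 2 * A * (2 * t ^ 1) + lam / 4 * A ^ 2 * (4 * t ^ 3)
        - 1 / γ * B * (γ * t ^ (γ - 1))) t :=
    (((hasDerivAt_pow 2 t).const_mul _).add ((hasDerivAt_pow 4 t).const_mul _)).sub
      ((hasDerivAt_rpow_const (Or.inl ht.ne')).const_mul _)
  convert hderiv using 1
  have hγ1 : t ^ 3 * t ^ (γ - 4) = t ^ (γ - 1) := by
    rw [← rpow_natCast, ← rpow_add ht]; ring_nf
  have hneg2 : t ^ 3 * t ^ (-2 : ℝ) = t := by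
    rw [← rpow_natCast, ← rpow_add ht]; norm_num
  unfold critLevel
  field_simp
  linear_combination (a * A) * hneg2 - B * hγ1

lemma critLevel_eq_of_deriv_psi_eq_zero {a γ A B lam t : ℝ} (hγ : γ ≠ 0) (ht : 0 < t)
    (hcrit : deriv (psi a γ A B lam) t = 0) : critLevel a γ A B t = lam * A ^ 2 := by
  rw [(psi_hasDerivAt hγ ht).deriv] at hcrit
  have := (mul_eq_zero.mp hcrit).resolve_left (by positivity)
  linarith

lemma critLevel_hasDerivAt (a γ A B : ℝ) {x : ℝ} (hx : 0 < x) :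
    HasDerivAt (critLevel a γ A B) (x ^ (-3 : ℝ) * (2 * a * A - (4 - γ) * B * x ^ (γ - 2))) x := by
  have hderiv : HasDerivAt (critLevel a γ A B)
      (B * ((γ - 4) * x ^ (γ - 4 - 1)) - a * A * (-2 * x ^ ((-2 : ℝ) - 1))) x :=
    ((hasDerivAt_rpow_const (Or.inl hx.ne')).const_mul B).sub
      ((hasDerivAt_rpow_const (Or.inl hx.ne')).const_mul (a * A))
  convert hderiv using 1
  have hγ5 : x ^ (γ - 4 - 1) = x ^ (-3 : ℝ) * x ^ (γ - 2) := by
    rw [← rpow_add hx]; ring_nf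
  rw [hγ5]
  norm_num
  ring

lemma Tab_pos {a γ A B : ℝ} (ha : 0 < a) (hγ4 : γ < 4) (hA : 0 < A) (hB : 0 < B) :
    0 < Tab a γ A B :=
  rpow_pos_of_pos (div_pos (by positivity) (mul_pos (sub_pos.mpr hγ4) hB)) _

lemma Tab_rpow_sub_two {a γ A B : ℝ} (hγ : γ ≠ 2) (hbase : 0 ≤ 2 * a * A / ((4 - γ) * B)) :
    Tab a γ A B ^ (γ - 2) = 2 * a * A / ((4 - γ) * B) := by
  rw [Tab, ← rpow_mul hbase, one_div_mul_cancel (sub_ne_zero.mpr hγ), rpow_one]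

lemma two_mul_sub_eq_mul_Tab_rpow_sub {a γ A B : ℝ} (ha : 0 < a) (hγ2 : 2 < γ) (hγ4 : γ < 4)
    (hA : 0 < A) (hB : 0 < B) (x : ℝ) :
    2 * a * A - (4 - γ) * B * x ^ (γ - 2) =
      (4 - γ) * B * (Tab a γ A B ^ (γ - 2) - x ^ (γ - 2)) := by
  have hden : 0 < (4 - γ) * B := mul_pos (sub_pos.mpr hγ4) hB
  rw [Tab_rpow_sub_two (by linarith) (div_pos (by positivity) hden).le, mul_sub,
    mul_div_cancel₀ _ hden.ne']

lemma critLevel_strictMonoOn {a γ A B : ℝ} (ha : 0 < a) (hγ2 : 2 < γ) (hγ4 : γ < 4)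
    (hA : 0 < A) (hB : 0 < B) : StrictMonoOn (critLevel a γ A B) (Ioc 0 (Tab a γ A B)) := by
  apply strictMonoOn_of_deriv_pos (convex_Ioc 0 _)
  · exact fun x hx ↦ (critLevel_hasDerivAt a γ A B hx.1).continuousAt.continuousWithinAt
  · intro x hx
    rw [interior_Ioc] at hx
    rw [(critLevel_hasDerivAt a γ A B hx.1).deriv,
      two_mul_sub_eq_mul_Tab_rpow_sub ha hγ2 hγ4 hA hB]
    have hpow : x ^ (γ - 2) < Tab a γ A B ^ (γ - 2) :=
      rpow_lt_rpow hx.1.le hx.2 (by linarith)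
    exact mul_pos (rpow_pos_of_pos hx.1 _)
      (mul_pos (mul_pos (sub_pos.mpr hγ4) hB) (sub_pos.mpr hpow))

lemma critLevel_strictAntiOn {a γ A B : ℝ} (ha : 0 < a) (hγ2 : 2 < γ) (hγ4 : γ < 4)
    (hA : 0 < A) (hB : 0 < B) : StrictAntiOn (critLevel a γ A B) (Ici (Tab a γ A B)) := by
  have hT := Tab_pos ha hγ4 hA hB
  apply strictAntiOn_of_deriv_neg (convex_Ici _)
  · exact fun x hx ↦
      (critLevel_hasDerivAt a γ A B (hT.trans_le hx)).continuousAt.continuousWithinAt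
  · intro x hx
    rw [interior_Ici] at hx
    have hx0 : 0 < x := hT.trans hx
    rw [(critLevel_hasDerivAt a γ A B hx0).deriv,
      two_mul_sub_eq_mul_Tab_rpow_sub ha hγ2 hγ4 hA hB]
    have hpow : Tab a γ A B ^ (γ - 2) < x ^ (γ - 2) :=
      rpow_lt_rpow hT.le hx (by linarith)
    exact mul_neg_of_pos_of_neg (rpow_pos_of_pos hx0 _)
      (mul_neg_of_pos_of_neg (mul_pos (sub_pos.mpr hγ4) hB) (sub_neg.mpr hpow))

theorem stmt_13_general (a γ A B lam tminus tplus : ℝ) (ha : 0 < a) (hγ2 : 2 < γ)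
    (hγ4 : γ < 4) (hA : 0 < A) (hB : 0 < B) (htm : 0 < tminus) (horder : tminus < tplus)
    (hc1 : deriv (psi a γ A B lam) tminus = 0)
    (hc2 : deriv (psi a γ A B lam) tplus = 0) :
    tminus < Tab a γ A B ∧ Tab a γ A B < tplus := by
  have hγ0 : γ ≠ 0 := by linarith
  have hlevel_m := critLevel_eq_of_deriv_psi_eq_zero hγ0 htm hc1
  have hlevel_p := critLevel_eq_of_deriv_psi_eq_zero hγ0 (htm.trans horder) hc2
  exact lt_and_lt_of_strictMonoOn_Ioc_of_strictAntiOn_Ici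
    (critLevel_strictMonoOn ha hγ2 hγ4 hA hB) (critLevel_strictAntiOn ha hγ2 hγ4 hA hB)
    htm horder (hlevel_m.trans hlevel_p.symm)

/-- for `0 < λ < Λ(A,B)`, the two critical points `t⁻ < t⁺` of `ψ_λ` on
`(0,∞)` satisfy `t⁻ < T(A,B) < t⁺`. -/
theorem stmt_13 (a γ A B lam tminus tplus : ℝ) (ha : 0 < a) (hγ2 : 2 < γ)
    (hγ4 : γ < 4) (hA : 0 < A) (hB : 0 < B) (hlam : 0 < lam)
    (hlt : lam < Lam a γ A B) (htm : 0 < tminus) (horder : tminus < tplus)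
    (hc1 : deriv (psi a γ A B lam) tminus = 0)
    (hc2 : deriv (psi a γ A B lam) tplus = 0) :
    tminus < Tab a γ A B ∧ Tab a γ A B < tplus :=
  stmt_13_general a γ A B lam tminus tplus ha hγ2 hγ4 hA hB htm horder hc1 hc2
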